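/- arXiv:0707.0574 — 3 statements merged into one kernel-verified Lean document; each statement's English description precedes it below -/
import Mathlib

section
/- For fixed unit vector θ with μᵀθ < 0, log(2Φ(√(π/2)|s| μᵀθ)) = −(π/4)|s|² (μᵀθ)² + O(log |s|) as |s| → ∞; consequently the centered skew-normal cumulant function satisfies G_{|s|}(θ) = (|s|²/2) θᵀ(Σ − (π/2)μμᵀ)θ + O(|s|). -/
/-!
Put `t = √(π/2) r μᵀθ`, which tends to `-∞` as `r → ∞`. Comparing `e^{-u²/2}` on `(-∞, t]` with
`e^{t²/2 - tu}` from above and with its minimum on `(t + 1/t, t]` from below gives the Mills-ratio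
bounds `e^{-t²/2 - 3/2}/|t| ≤ ∫_{-∞}^t e^{-u²/2} du ≤ e^{-t²/2}/|t|` for `t ≤ -1`. Taking logarithms,
`log (2Φ(t)) = -t²/2 - log |t| + O(1)`, and `log |t| = log r + O(1)`. The cumulant function differs
from `(r²/2) θᵀ(Σ - (π/2)μμᵀ)θ` by `-r μᵀθ` plus this `O(log r)` term.
-/

open MeasureTheory Matrix Real Filter Asymptotics Set

lemma dotProduct_sub_smul_vecMulVec_mulVec {n R : Type*} [Fintype n] [CommRing R]
    (S : Matrix n n R) (a : R) (μ θ : n → R) :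
    θ ⬝ᵥ (S - a • vecMulVec μ μ) *ᵥ θ = θ ⬝ᵥ S *ᵥ θ - a * (μ ⬝ᵥ θ) ^ 2 := by
  rw [sub_mulVec, smul_mulVec, dotProduct_sub, dotProduct_smul, vecMulVec_mulVec,
    dotProduct_smul, dotProduct_comm θ μ]
  simp only [MulOpposite.smul_eq_mul_unop, MulOpposite.unop_op, smul_eq_mul]
  ring

lemma integrable_exp_neg_sq_div_two : Integrable fun u : ℝ => exp (-u ^ 2 / 2) := by
  simpa [neg_div, div_eq_inv_mul] using integrable_exp_neg_mul_sq (by norm_num : (0 : ℝ) < 1 / 2)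

lemma integral_exp_neg_sq_div_two_Iic_pos (t : ℝ) : 0 < ∫ u in Iic t, exp (-u ^ 2 / 2) :=
  have : NeZero (volume.restrict (Iic t)) := ⟨by simp⟩
  integral_exp_pos integrable_exp_neg_sq_div_two.integrableOn

lemma integral_exp_neg_sq_div_two_Iic_le {t : ℝ} (ht : t < 0) :
    ∫ u in Iic t, exp (-u ^ 2 / 2) ≤ exp (-t ^ 2 / 2) / -t := by
  have hb : 0 < -t := neg_pos.2 ht
  calc ∫ u in Iic t, exp (-u ^ 2 / 2)
      ≤ ∫ u in Iic t, exp (t ^ 2 / 2) * exp (-t * u) := by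
        refine integral_mono_of_nonneg (ae_of_all _ fun u => (exp_pos _).le)
          ((integrableOn_exp_mul_Iic hb t).const_mul _) (ae_of_all _ fun u => ?_)
        dsimp only
        rw [← exp_add]
        exact exp_le_exp.2 (by nlinarith [sq_nonneg (t - u)])
    _ = exp (-t ^ 2 / 2) / -t := by
        rw [integral_const_mul, integral_exp_mul_Iic hb, mul_div_assoc', ← exp_add]
        ring_nf

lemma exp_neg_sq_div_two_sub_div_le_integral_Iic {t : ℝ} (ht : t ≤ -1) :
    exp (-t ^ 2 / 2 - 3 / 2) / -t ≤ ∫ u in Iic t, exp (-u ^ 2 / 2) := by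
  have ht0 : t < 0 := by linarith
  -- on `(t + 1/t, t]`, an interval of length `1/|t|`, we have `u² ≤ (t + 1/t)² ≤ t² + 3`
  have hbound : ∀ u ∈ Ioc (t + t⁻¹) t, exp (-t ^ 2 / 2 - 3 / 2) ≤ exp (-u ^ 2 / 2) := by
    rintro u ⟨hu_lo, hu_hi⟩
    have hinv : -1 ≤ t⁻¹ := by rw [inv_eq_one_div, le_div_iff_of_neg ht0]; linarith
    have hsq : (t + t⁻¹) ^ 2 = t ^ 2 + 2 + t⁻¹ ^ 2 := by
      rw [add_sq, mul_assoc, mul_inv_cancel₀ ht0.ne]; ring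
    refine exp_le_exp.2 ?_
    nlinarith [inv_lt_zero.2 ht0]
  have hlen : volume.real (Ioc (t + t⁻¹) t) = (-t)⁻¹ := by
    rw [Real.volume_real_Ioc_of_le (by linarith [inv_lt_zero.2 ht0]), inv_neg]
    ring
  calc exp (-t ^ 2 / 2 - 3 / 2) / -t
      = exp (-t ^ 2 / 2 - 3 / 2) * volume.real (Ioc (t + t⁻¹) t) := by
        rw [hlen, div_eq_mul_inv]
    _ ≤ ∫ u in Ioc (t + t⁻¹) t, exp (-u ^ 2 / 2) :=
        setIntegral_ge_of_const_le_real measurableSet_Ioc (by simp) hbound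
          integrable_exp_neg_sq_div_two.integrableOn
    _ ≤ ∫ u in Iic t, exp (-u ^ 2 / 2) :=
        setIntegral_mono_set integrable_exp_neg_sq_div_two.integrableOn
          (ae_of_all _ fun u => (exp_pos _).le) Ioc_subset_Iic_self.eventuallyLE

lemma abs_log_integral_exp_neg_sq_div_two_Iic_add_le {t : ℝ} (ht : t ≤ -1) :
    |log (∫ u in Iic t, exp (-u ^ 2 / 2)) + t ^ 2 / 2 + log (-t)| ≤ 3 / 2 := by
  have hb : 0 < -t := by linarith
  have hI := integral_exp_neg_sq_div_two_Iic_pos t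
  have hlo : -t ^ 2 / 2 - 3 / 2 - log (-t) ≤ log (∫ u in Iic t, exp (-u ^ 2 / 2)) := by
    rw [← log_exp (-t ^ 2 / 2 - 3 / 2), ← log_div (exp_pos _).ne' hb.ne']
    exact log_le_log (by positivity) (exp_neg_sq_div_two_sub_div_le_integral_Iic ht)
  have hhi : log (∫ u in Iic t, exp (-u ^ 2 / 2)) ≤ -t ^ 2 / 2 - log (-t) := by
    rw [← log_exp (-t ^ 2 / 2), ← log_div (exp_pos _).ne' hb.ne']
    exact log_le_log hI (integral_exp_neg_sq_div_two_Iic_le (by linarith))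
  rw [abs_le]
  constructor <;> linarith

lemma isBigO_log_integral_exp_neg_sq_div_two_Iic_atBot :
    (fun t => log (∫ u in Iic t, exp (-u ^ 2 / 2)) + t ^ 2 / 2 + log (-t))
      =O[atBot] fun _ => (1 : ℝ) :=
  IsBigO.of_bound (3 / 2) <| (eventually_le_atBot (-1)).mono fun t ht => by
    simpa using abs_log_integral_exp_neg_sq_div_two_Iic_add_le ht

lemma isBigO_log_integral_exp_neg_sq_div_two_Iic_const_mul_atTop {c : ℝ} (hc : c < 0) :
    (fun r => log (∫ u in Iic (c * r), exp (-u ^ 2 / 2)) + (c * r) ^ 2 / 2) =O[atTop] log := by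
  have htail := isBigO_log_integral_exp_neg_sq_div_two_Iic_atBot.comp_tendsto
    (tendsto_id.const_mul_atTop_of_neg hc)
  refine ((htail.trans isLittleO_const_log_atTop.isBigO).sub
    (isBigO_log_mul_const_log_atTop (-c))).congr_left fun r => ?_
  simp only [Function.comp_apply, id, show -(c * r) = r * -c by ring, add_sub_cancel_right]

theorem skew_normal_cumulant_large_radius_neg_general
    (m : ℕ) (S : Matrix (Fin m) (Fin m) ℝ)
    (μ : Fin m → ℝ) (θ : Fin m → ℝ) (hneg : μ ⬝ᵥ θ < 0)
    (Φ : ℝ → ℝ)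
    (hΦ : ∀ t : ℝ, Φ t = ∫ u in Set.Iic t, (Real.sqrt (2 * π))⁻¹ * Real.exp (-u ^ 2 / 2))
    (G : ℝ → ℝ)
    (hG : ∀ r : ℝ, G r = -(r * (μ ⬝ᵥ θ)) + r ^ 2 / 2 * (θ ⬝ᵥ S.mulVec θ)
        + Real.log (2 * Φ (Real.sqrt (π / 2) * r * (μ ⬝ᵥ θ)))) :
    ((fun r : ℝ => Real.log (2 * Φ (Real.sqrt (π / 2) * r * (μ ⬝ᵥ θ)))
        + π / 4 * r ^ 2 * (μ ⬝ᵥ θ) ^ 2)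
      =O[atTop] (fun r : ℝ => Real.log r)) ∧
    ((fun r : ℝ => G r
        - r ^ 2 / 2 * (θ ⬝ᵥ (S - (π / 2) • Matrix.of fun i j => μ i * μ j).mulVec θ))
      =O[atTop] (fun r : ℝ => r)) := by
  set c := √(π / 2) * (μ ⬝ᵥ θ)
  have hc : c < 0 := mul_neg_of_pos_of_neg (sqrt_pos.2 (by positivity)) hneg
  have hsq (r : ℝ) : π / 4 * r ^ 2 * (μ ⬝ᵥ θ) ^ 2 = (c * r) ^ 2 / 2 := by
    rw [mul_pow, mul_pow, sq_sqrt (by positivity)]; ring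
  have hlogΦ (r : ℝ) : log (2 * Φ (√(π / 2) * r * (μ ⬝ᵥ θ)))
      = log (2 * (√(2 * π))⁻¹) + log (∫ u in Iic (c * r), exp (-u ^ 2 / 2)) := by
    rw [hΦ, integral_const_mul, ← mul_assoc,
      log_mul (by positivity) (integral_exp_neg_sq_div_two_Iic_pos _).ne', mul_right_comm]
  have hlog : (fun r => log (2 * Φ (√(π / 2) * r * (μ ⬝ᵥ θ))) + π / 4 * r ^ 2 * (μ ⬝ᵥ θ) ^ 2)
      =O[atTop] log :=
    ((isLittleO_const_log_atTop (c := log (2 * (√(2 * π))⁻¹))).isBigO.add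
      (isBigO_log_integral_exp_neg_sq_div_two_Iic_const_mul_atTop hc)).congr_left fun r => by
        rw [hlogΦ, hsq, add_assoc]
  refine ⟨hlog, (((isBigO_refl _ _).const_mul_left (-(μ ⬝ᵥ θ))).add
    (hlog.trans isLittleO_log_id_atTop.isBigO)).congr_left fun r => ?_⟩
  rw [hG, ← vecMulVec.eq_def, dotProduct_sub_smul_vecMulVec_mulVec]
  simp only [id]
  ring

/-- Large-radius behaviour of the centered skew-normal cumulant function along a
direction with `μᵀθ < 0`:
`log (2Φ(√(π/2) r μᵀθ)) = −(π/4) r² (μᵀθ)² + O(log r)` and consequently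
`G_r(θ) = (r²/2) θᵀ(S − (π/2)μμᵀ)θ + O(r)` as `r → ∞`. -/
theorem skew_normal_cumulant_large_radius_neg
    (m : ℕ) (S : Matrix (Fin m) (Fin m) ℝ) (hS : S.PosDef)
    (μ : Fin m → ℝ) (θ : Fin m → ℝ) (hθ : θ ⬝ᵥ θ = 1) (hneg : μ ⬝ᵥ θ < 0)
    (Φ : ℝ → ℝ)
    (hΦ : ∀ t : ℝ, Φ t = ∫ u in Set.Iic t, (Real.sqrt (2 * π))⁻¹ * Real.exp (-u ^ 2 / 2))
    (G : ℝ → ℝ)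
    (hG : ∀ r : ℝ, G r = -(r * (μ ⬝ᵥ θ)) + r ^ 2 / 2 * (θ ⬝ᵥ S.mulVec θ)
        + Real.log (2 * Φ (Real.sqrt (π / 2) * r * (μ ⬝ᵥ θ)))) :
    ((fun r : ℝ => Real.log (2 * Φ (Real.sqrt (π / 2) * r * (μ ⬝ᵥ θ)))
        + π / 4 * r ^ 2 * (μ ⬝ᵥ θ) ^ 2)
      =O[atTop] (fun r : ℝ => Real.log r)) ∧
    ((fun r : ℝ => G r
        - r ^ 2 / 2 * (θ ⬝ᵥ (S - (π / 2) • Matrix.of fun i j => μ i * μ j).mulVec θ))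
      =O[atTop] (fun r : ℝ => r)) :=
  skew_normal_cumulant_large_radius_neg_general m S μ θ hneg Φ hΦ G hG
end

section
/- Let f and g be two probability densities on ℝ with finite moment generating functions at all s > 0. If there exists z* ∈ ℝ such that f(z) > g(z) for all z > z*, then there exists s* > 0 such that for all s > s*, log ∫ f(z) e^{sz} dz > log ∫ g(z) e^{sz} dz. -/
/-!
Put `h = f - g`. Left of `z*` the exponential weight is at most `exp (s z*)`, so
`∫_{z ≤ z*} h(z) e^{sz} ≥ -exp (s z*) ∫ |h|`; right of `z*` the integrand is nonnegative and
beyond `z* + 1` the weight is at least `exp (s (z* + 1))`, so that part is at least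
`exp (s (z* + 1)) ∫_{z* + 1}^∞ h` with a positive integral. The extra factor `e^s` makes the
tail win, so `∫ f e^{sz} > ∫ g e^{sz} > 0` for large `s`, and `log` is monotone.
-/

open MeasureTheory Real Filter Set

section Positivity

variable {α : Type*} [MeasurableSpace α] {μ : Measure α}

theorem setIntegral_pos_of_forall_pos {s : Set α} {f : α → ℝ} (hs : MeasurableSet s)
    (hμs : μ s ≠ 0) (hf : ∀ x ∈ s, 0 < f x) (hfi : IntegrableOn f s μ) :
    0 < ∫ x in s, f x ∂μ := by
  have hnonneg : 0 ≤ᵐ[μ.restrict s] f :=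
    (ae_restrict_mem hs).mono fun x hx => (hf x hx).le
  rw [setIntegral_pos_iff_support_of_nonneg_ae hnonneg hfi,
    inter_eq_right.2 fun x hx => Function.mem_support.2 (hf x hx).ne']
  exact pos_iff_ne_zero.2 hμs

theorem integral_mul_pos_of_integral_pos {f w : α → ℝ} (hf : 0 ≤ f) (hw : ∀ x, 0 < w x)
    (hfi : Integrable f μ) (hfwi : Integrable (fun x => f x * w x) μ)
    (hpos : 0 < ∫ x, f x ∂μ) : 0 < ∫ x, f x * w x ∂μ := by
  have hsupp : Function.support (fun x => f x * w x) = Function.support f := by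
    ext x; simp [(hw x).ne']
  rw [integral_pos_iff_support_of_nonneg hf hfi] at hpos
  rwa [integral_pos_iff_support_of_nonneg (fun x => mul_nonneg (hf x) (hw x).le) hfwi, hsupp]

end Positivity

section ExponentialMoment

variable {h : ℝ → ℝ} {s : ℝ}

theorem neg_exp_mul_integral_abs_le_setIntegral_Iic (hi : Integrable h)
    (hexp : Integrable fun z => h z * exp (s * z)) (hs : 0 ≤ s) (b : ℝ) :
    -(exp (s * b) * ∫ z, |h z|) ≤ ∫ z in Iic b, h z * exp (s * z) := by
  have hbound : ∫ z in Iic b, |h z * exp (s * z)| ≤ ∫ z, |h z| * exp (s * b) :=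
    calc ∫ z in Iic b, |h z * exp (s * z)| ≤ ∫ z in Iic b, |h z| * exp (s * b) := by
          refine setIntegral_mono_on hexp.abs.integrableOn (hi.abs.mul_const _).integrableOn
            measurableSet_Iic fun z hz => ?_
          rw [abs_mul, abs_of_pos (exp_pos _)]
          exact mul_le_mul_of_nonneg_left (exp_le_exp.2 (mul_le_mul_of_nonneg_left hz hs))
            (abs_nonneg _)
      _ ≤ ∫ z, |h z| * exp (s * b) :=
          setIntegral_le_integral (hi.abs.mul_const _)
            (Eventually.of_forall fun z => mul_nonneg (abs_nonneg _) (exp_pos _).le)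
  rw [integral_mul_const, mul_comm] at hbound
  have := abs_integral_le_integral_abs (f := fun z => h z * exp (s * z))
    (μ := volume.restrict (Iic b))
  linarith [neg_abs_le (∫ z in Iic b, h z * exp (s * z))]

theorem exp_mul_setIntegral_Ioi_le_setIntegral_Ioi (hi : Integrable h)
    (hexp : Integrable fun z => h z * exp (s * z)) (hs : 0 ≤ s) {a b : ℝ} (hba : b ≤ a)
    (htail : ∀ z, b < z → 0 ≤ h z) :
    exp (s * a) * ∫ z in Ioi a, h z ≤ ∫ z in Ioi b, h z * exp (s * z) := by
  calc exp (s * a) * ∫ z in Ioi a, h z = ∫ z in Ioi a, h z * exp (s * a) := by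
        rw [integral_mul_const, mul_comm]
    _ ≤ ∫ z in Ioi a, h z * exp (s * z) :=
        setIntegral_mono_on (hi.mul_const _).integrableOn hexp.integrableOn measurableSet_Ioi
          fun z hz => mul_le_mul_of_nonneg_left
            (exp_le_exp.2 (mul_le_mul_of_nonneg_left (le_of_lt hz) hs))
            (htail z (hba.trans_lt hz))
    _ ≤ ∫ z in Ioi b, h z * exp (s * z) :=
        setIntegral_mono_set hexp.integrableOn
          ((ae_restrict_mem measurableSet_Ioi).mono fun z hz =>
            mul_nonneg (htail z hz) (exp_pos _).le)
          (Ioi_subset_Ioi hba).eventuallyLE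

theorem eventually_integral_mul_exp_pos (hi : Integrable h)
    (hexp : ∀ s, 0 < s → Integrable fun z => h z * exp (s * z)) {b : ℝ}
    (htail : ∀ z, b < z → 0 < h z) :
    ∀ᶠ s in atTop, 0 < ∫ z, h z * exp (s * z) := by
  set c := ∫ z in Ioi (b + 1), h z
  set M := ∫ z, |h z|
  have hc : 0 < c := setIntegral_pos_of_forall_pos measurableSet_Ioi (by simp)
    (fun z hz => htail z (by linarith [mem_Ioi.1 hz])) hi.integrableOn
  have hsmall : ∀ᶠ s in atTop, M * exp (-s) < c :=
    (by simpa using tendsto_exp_neg_atTop_nhds_zero.const_mul M : Tendsto _ atTop _)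
      |>.eventually (gt_mem_nhds hc)
  filter_upwards [hsmall, eventually_gt_atTop 0] with s hsmall hs
  have hexp_s := hexp s hs
  have hleft := neg_exp_mul_integral_abs_le_setIntegral_Iic hi hexp_s hs.le b
  have hright := exp_mul_setIntegral_Ioi_le_setIntegral_Ioi hi hexp_s hs.le
    (le_add_of_nonneg_right zero_le_one) fun z hz => (htail z hz).le
  have hgap : exp (s * b) * M < exp (s * (b + 1)) * c := by
    have : exp (s * b) = exp (s * (b + 1)) * exp (-s) := by rw [← exp_add]; ring_nf
    rw [this, mul_assoc, mul_comm (exp (-s))]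
    exact mul_lt_mul_of_pos_left hsmall (exp_pos _)
  rw [← intervalIntegral.integral_Iic_add_Ioi hexp_s.integrableOn hexp_s.integrableOn]
  linarith

end ExponentialMoment

theorem fatter_tail_larger_cumulant_general
    (f g : ℝ → ℝ) (hg0 : ∀ z, 0 ≤ g z)
    (hfi : Integrable f) (hgi : Integrable g)
    (hg1 : ∫ z, g z = 1)
    (hfint : ∀ s : ℝ, 0 < s → Integrable (fun z => f z * Real.exp (s * z)))
    (hgint : ∀ s : ℝ, 0 < s → Integrable (fun z => g z * Real.exp (s * z)))
    (zs : ℝ) (htail : ∀ z, zs < z → g z < f z) :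
    ∃ ss : ℝ, 0 < ss ∧ ∀ s : ℝ, ss < s →
      Real.log (∫ z, g z * Real.exp (s * z))
        < Real.log (∫ z, f z * Real.exp (s * z)) := by
  have hdiff_int (s : ℝ) (hs : 0 < s) : Integrable fun z => (f z - g z) * exp (s * z) := by
    simp only [sub_mul]
    exact (hfint s hs).sub (hgint s hs)
  obtain ⟨N, hN⟩ := eventually_atTop.1 <| (eventually_gt_atTop 0).and <|
    eventually_integral_mul_exp_pos (hfi.sub hgi) hdiff_int fun z hz => sub_pos.2 (htail z hz)
  refine ⟨max N 1, by positivity, fun s hs => ?_⟩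
  obtain ⟨hs0, hdiff⟩ := hN s (max_lt_iff.1 hs).1.le
  have hg_pos : 0 < ∫ z, g z * exp (s * z) :=
    integral_mul_pos_of_integral_pos hg0 (fun z => exp_pos _) hgi (hgint s hs0) (by simp [hg1])
  simp only [Pi.sub_apply, sub_mul] at hdiff
  rw [integral_sub (hfint s hs0) (hgint s hs0), sub_pos] at hdiff
  exact log_lt_log hg_pos hdiff

/-- Fat-tail comparison theorem: if the density `f` dominates `g` strictly beyond some
`z*`, then for all large enough `s` the cumulant function of `f` exceeds that of `g`. -/
theorem fatter_tail_larger_cumulant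
    (f g : ℝ → ℝ) (hf0 : ∀ z, 0 ≤ f z) (hg0 : ∀ z, 0 ≤ g z)
    (hfi : Integrable f) (hgi : Integrable g)
    (hf1 : ∫ z, f z = 1) (hg1 : ∫ z, g z = 1)
    (hfint : ∀ s : ℝ, 0 < s → Integrable (fun z => f z * Real.exp (s * z)))
    (hgint : ∀ s : ℝ, 0 < s → Integrable (fun z => g z * Real.exp (s * z)))
    (zs : ℝ) (htail : ∀ z, zs < z → g z < f z)
    (hpos : 0 < ∫ z in Set.Ioi zs, (f z - g z)) :
    ∃ ss : ℝ, 0 < ss ∧ ∀ s : ℝ, ss < s →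
      Real.log (∫ z, g z * Real.exp (s * z))
        < Real.log (∫ z, f z * Real.exp (s * z)) :=
  fatter_tail_larger_cumulant_general f g hg0 hfi hgi hg1 hfint hgint zs htail
end

section
/- Under the hypotheses of the fat-tail comparison theorem, the 'cross' integral inequality holds: for all s > s*, ∫_{z*}^{∞} e^{sz}[f(z) − g(z)] dz > ∫_{−∞}^{z*} e^{sz}[g(z) − f(z)] dz, where z* is such that f > g on (z*,∞). -/
open MeasureTheory Real

/-- The cross integral inequality: under the fat-tail hypotheses, for all large enough
`s`, `∫_{z*}^{∞} e^{sz}(f − g) > ∫_{−∞}^{z*} e^{sz}(g − f)`. -/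
theorem cross_integral_inequality
    (f g : ℝ → ℝ) (hf0 : ∀ z, 0 ≤ f z) (hg0 : ∀ z, 0 ≤ g z)
    (hfi : Integrable f) (hgi : Integrable g)
    (hf1 : ∫ z, f z = 1) (hg1 : ∫ z, g z = 1)
    (hfint : ∀ s : ℝ, 0 < s → Integrable (fun z => f z * Real.exp (s * z)))
    (hgint : ∀ s : ℝ, 0 < s → Integrable (fun z => g z * Real.exp (s * z)))
    (zs : ℝ) (htail : ∀ z, zs < z → g z < f z)
    (hpos : 0 < ∫ z in Set.Ioi zs, (f z - g z)) :
    ∃ ss : ℝ, 0 < ss ∧ ∀ s : ℝ, ss < s →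
      (∫ z in Set.Iic zs, Real.exp (s * z) * (g z - f z))
        < ∫ z in Set.Ioi zs, Real.exp (s * z) * (f z - g z) := by
  set C := ∫ z in Set.Ioi zs, (f z - g z) with hC
  set D := ∫ z in Set.Ioi zs, (z - zs) * (f z - g z) with hD
  set G := ∫ z in Set.Iic zs, g z with hG
  have hfg : Integrable (fun z => f z - g z) := hfi.sub hgi
  -- integrability of (z - zs) * (f z - g z) on Ioi zs
  have hbnd : Integrable
      (fun z => Real.exp (-zs) * (f z * Real.exp z + g z * Real.exp z)) := by
    have h1 := hfint 1 one_pos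
    have h2 := hgint 1 one_pos
    simp only [one_mul] at h1 h2
    exact (h1.add h2).const_mul _
  have hmeas : AEStronglyMeasurable (fun z => (z - zs) * (f z - g z)) volume :=
    ((continuous_id.sub continuous_const).aestronglyMeasurable).mul hfg.aestronglyMeasurable
  have hDint : IntegrableOn (fun z => (z - zs) * (f z - g z)) (Set.Ioi zs) := by
    apply Integrable.mono' hbnd.restrict hmeas.restrict
    rw [ae_restrict_iff' measurableSet_Ioi]
    filter_upwards with z hz
    have hz' : (0:ℝ) ≤ z - zs := by simp only [Set.mem_Ioi] at hz; linarith
    rw [Real.norm_eq_abs, abs_mul, abs_of_nonneg hz']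
    have h1 : z - zs ≤ Real.exp (z - zs) := by
      have := Real.add_one_le_exp (z - zs); linarith
    have h2 : |f z - g z| ≤ f z + g z :=
      abs_le.mpr ⟨by linarith [hf0 z, hg0 z], by linarith [hf0 z, hg0 z]⟩
    calc (z - zs) * |f z - g z| ≤ Real.exp (z - zs) * (f z + g z) :=
          mul_le_mul h1 h2 (abs_nonneg _) (Real.exp_nonneg _)
      _ = Real.exp (-zs) * (f z * Real.exp z + g z * Real.exp z) := by
          rw [Real.exp_sub, Real.exp_neg, div_eq_mul_inv]; ring
  -- D > 0
  have hDnonneg : ∀ z ∈ Set.Ioi zs, 0 < (z - zs) * (f z - g z) := by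
    intro z hz
    simp only [Set.mem_Ioi] at hz
    exact mul_pos (by linarith) (by have := htail z hz; linarith)
  have hDpos : 0 < D := by
    rw [hD, MeasureTheory.setIntegral_pos_iff_support_of_nonneg_ae]
    · have : Set.Ioi zs ⊆ Function.support (fun z => (z - zs) * (f z - g z)) := by
        intro z hz; exact ne_of_gt (hDnonneg z hz)
      have h2 : Function.support (fun z => (z - zs) * (f z - g z)) ∩ Set.Ioi zs
          = Set.Ioi zs := by
        apply Set.inter_eq_self_of_subset_right this
      rw [h2, Real.volume_Ioi]
      exact ENNReal.zero_lt_top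
    · rw [Filter.EventuallyLE, ae_restrict_iff' measurableSet_Ioi]
      filter_upwards with z hz
      exact le_of_lt (hDnonneg z hz)
    · exact hDint
  have hGnonneg : 0 ≤ G := by
    rw [hG]
    apply setIntegral_nonneg measurableSet_Iic
    intro z _; exact hg0 z
  refine ⟨max 1 (G / D), lt_of_lt_of_le one_pos (le_max_left _ _), ?_⟩
  intro s hs
  have hs1 : (1:ℝ) < s := lt_of_le_of_lt (le_max_left _ _) hs
  have hs0 : 0 < s := by linarith
  have hGsD : G < s * D := by
    have : G / D < s := lt_of_le_of_lt (le_max_right _ _) hs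
    rw [div_lt_iff₀ hDpos] at this; linarith [this]
  -- integrability of exponential integrands
  have hEfg : Integrable (fun z => Real.exp (s * z) * (f z - g z)) := by
    have := (hfint s hs0).sub (hgint s hs0)
    apply this.congr
    filter_upwards with z; simp only [Pi.sub_apply]; ring
  have hEgf : Integrable (fun z => Real.exp (s * z) * (g z - f z)) := by
    have := (hgint s hs0).sub (hfint s hs0)
    apply this.congr
    filter_upwards with z; simp only [Pi.sub_apply]; ring
  have hEg : Integrable (fun z => Real.exp (s * zs) * g z) := (hgi.const_mul _)
  -- LHS bound
  have hLHS : (∫ z in Set.Iic zs, Real.exp (s * z) * (g z - f z))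
      ≤ Real.exp (s * zs) * G := by
    have hmono : (∫ z in Set.Iic zs, Real.exp (s * z) * (g z - f z))
        ≤ ∫ z in Set.Iic zs, Real.exp (s * zs) * g z := by
      apply setIntegral_mono_on hEgf.integrableOn hEg.integrableOn measurableSet_Iic
      intro z hz
      simp only [Set.mem_Iic] at hz
      have he : Real.exp (s * z) ≤ Real.exp (s * zs) :=
        Real.exp_le_exp.mpr (by nlinarith)
      calc Real.exp (s * z) * (g z - f z) ≤ Real.exp (s * z) * g z := by
            have := hf0 z
            nlinarith [Real.exp_pos (s * z)]
        _ ≤ Real.exp (s * zs) * g z := mul_le_mul_of_nonneg_right he (hg0 z)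
    rw [hG, ← integral_const_mul]
    exact hmono
  -- RHS bound
  have hsum : IntegrableOn
      (fun z => Real.exp (s * zs) * ((f z - g z) + s * ((z - zs) * (f z - g z))))
      (Set.Ioi zs) := by
    exact ((hfg.integrableOn.add (hDint.const_mul s)).const_mul _)
  have hRHS : Real.exp (s * zs) * (C + s * D)
      ≤ ∫ z in Set.Ioi zs, Real.exp (s * z) * (f z - g z) := by
    have hmono : (∫ z in Set.Ioi zs,
        Real.exp (s * zs) * ((f z - g z) + s * ((z - zs) * (f z - g z))))
        ≤ ∫ z in Set.Ioi zs, Real.exp (s * z) * (f z - g z) := by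
      apply setIntegral_mono_on hsum hEfg.integrableOn measurableSet_Ioi
      intro z hz
      simp only [Set.mem_Ioi] at hz
      have hfgz : 0 ≤ f z - g z := by have := htail z hz; linarith
      have hkey : Real.exp (s * zs) * (1 + s * (z - zs)) ≤ Real.exp (s * z) := by
        have h1 : s * (z - zs) + 1 ≤ Real.exp (s * (z - zs)) :=
          Real.add_one_le_exp _
        have : Real.exp (s * z) = Real.exp (s * zs) * Real.exp (s * (z - zs)) := by
          rw [← Real.exp_add]; ring_nf
        rw [this]
        apply mul_le_mul_of_nonneg_left (by linarith) (Real.exp_nonneg _)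
      calc Real.exp (s * zs) * ((f z - g z) + s * ((z - zs) * (f z - g z)))
          = (Real.exp (s * zs) * (1 + s * (z - zs))) * (f z - g z) := by ring
        _ ≤ Real.exp (s * z) * (f z - g z) :=
            mul_le_mul_of_nonneg_right hkey hfgz
    have heq : (∫ z in Set.Ioi zs,
        Real.exp (s * zs) * ((f z - g z) + s * ((z - zs) * (f z - g z))))
        = Real.exp (s * zs) * (C + s * D) := by
      rw [integral_const_mul, integral_add hfg.integrableOn (hDint.const_mul s),
        integral_const_mul]
    rw [← heq]
    exact hmono
  calc (∫ z in Set.Iic zs, Real.exp (s * z) * (g z - f z))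
      ≤ Real.exp (s * zs) * G := hLHS
    _ < Real.exp (s * zs) * (C + s * D) := by
        apply mul_lt_mul_of_pos_left _ (Real.exp_pos _)
        have : 0 < C := hpos
        linarith
    _ ≤ _ := hRHS
end
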